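/- Let E be a process space and suppose sup_{0≤t≤T} ||X^{n}_t(ω) - X_t(ω)|| → 0 along a subsequence a.s., and let U, Θ : [0,T]×H → ℝ be continuous with U ≥ Θ, U and Θ Lipschitz in space uniformly in time, and U^{(n)}, Θ^{(n)} converging to U, Θ uniformly on compact subsets of [0,T]×H. Define τ* := inf{s ≥ t : U(s, X_s) = Θ(s, X_s)} ∧ T and τ*_n := inf{s ≥ t : U^{(n)}(s, X^n_s) = Θ^{(n)}(s, X^n_s)} ∧ T. Then along a further subsequence, τ* ∧ τ*_{n_j} → τ* almost surely as j → ∞. -/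
import Mathlib


open MeasureTheory Set Filter

private lemma le_biSup_Icc (f : ℝ → ℝ) (hf : Continuous f) (a b s : ℝ) (hs : s ∈ Icc a b) :
    f s ≤ ⨆ u ∈ Icc a b, f u := by
  obtain ⟨C, hC⟩ := (isCompact_Icc.image hf).bddAbove
  have hbdd : BddAbove (range fun u => ⨆ _ : u ∈ Icc a b, f u) := by
    refine ⟨max C 0, ?_⟩
    rintro x ⟨u, rfl⟩
    simp only []
    by_cases hu : u ∈ Icc a b
    · rw [ciSup_pos (f := fun _ => f u) hu]
      exact le_max_of_le_left (hC ⟨u, hu, rfl⟩)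
    · simp only [hu]
      rw [Real.iSup_of_isEmpty]
      · exact le_max_right _ _
  calc f s = ⨆ _ : s ∈ Icc a b, f s := (ciSup_pos (f := fun _ => f s) hs).symm
    _ ≤ ⨆ u ∈ Icc a b, f u := le_ciSup hbdd s

/-- Convergence of the approximating optimal stopping times: along a further
subsequence, `τ* ∧ τ*_{n_j} → τ*` almost surely. -/
theorem stmt9
    {H Ω : Type*} [NormedAddCommGroup H] [InnerProductSpace ℝ H] [CompleteSpace H]
    [TopologicalSpace.SeparableSpace H]
    [MeasurableSpace Ω] (P : Measure Ω) [IsProbabilityMeasure P]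
    (T t : ℝ) (ht : t ∈ Icc 0 T)
    -- `X` and the approximating processes `Xn` have continuous paths
    (X : ℝ → Ω → H) (Xn : ℕ → ℝ → Ω → H)
    (hXcont : ∀ ω, Continuous fun s => X s ω)
    (hXncont : ∀ n ω, Continuous fun s => Xn n s ω)
    -- a.s. uniform-in-time convergence along a subsequence
    (φ : ℕ → ℕ) (hφ : StrictMono φ)
    (hconv : ∀ᵐ ω ∂P,
      Tendsto (fun k => ⨆ s ∈ Icc 0 T, ‖Xn (φ k) s ω - X s ω‖) atTop (nhds 0))
    -- the limit functions
    (U Θ : ℝ → H → ℝ) (Un Θn : ℕ → ℝ → H → ℝ)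
    (hUcont : Continuous fun p : ℝ × H => U p.1 p.2)
    (hΘcont : Continuous fun p : ℝ × H => Θ p.1 p.2)
    (hUΘ : ∀ s x, Θ s x ≤ U s x)
    (LU LΘ : ℝ)
    (hUlip : ∀ n, ∀ s ∈ Icc 0 T, ∀ x y : H, |Un n s x - Un n s y| ≤ LU * ‖x - y‖)
    (hΘlip : ∀ n, ∀ s ∈ Icc 0 T, ∀ x y : H, |Θn n s x - Θn n s y| ≤ LΘ * ‖x - y‖)
    -- uniform convergence on compact subsets of `[0,T] × H`
    (hUconv : ∀ K : Set H, IsCompact K →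
      TendstoUniformlyOn (fun n (p : ℝ × H) => Un n p.1 p.2)
        (fun p : ℝ × H => U p.1 p.2) atTop (Icc 0 T ×ˢ K))
    (hΘconv : ∀ K : Set H, IsCompact K →
      TendstoUniformlyOn (fun n (p : ℝ × H) => Θn n p.1 p.2)
        (fun p : ℝ × H => Θ p.1 p.2) atTop (Icc 0 T ×ˢ K))
    -- the stopping times
    (τstar : Ω → ℝ) (τn : ℕ → Ω → ℝ)
    (hτstar : ∀ ω, τstar ω =
      sInf ({s ∈ Icc t T | U s (X s ω) = Θ s (X s ω)} ∪ {T}))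
    (hτn : ∀ n ω, τn n ω =
      sInf ({s ∈ Icc t T | Un n s (Xn n s ω) = Θn n s (Xn n s ω)} ∪ {T})) :
    ∃ ψ : ℕ → ℕ, StrictMono ψ ∧
      ∀ᵐ ω ∂P, Tendsto (fun j => min (τstar ω) (τn (φ (ψ j)) ω))
        atTop (nhds (τstar ω)) := by
  obtain ⟨ht0, htT⟩ := ht
  refine ⟨id, strictMono_id, ?_⟩
  filter_upwards [hconv] with ω hω
  simp only [id_eq]
  -- basic facts about the stopping times
  have hbdd : ∀ p : ℝ → Prop, ∀ s ∈ ({s ∈ Icc t T | p s} ∪ {T} : Set ℝ), t ≤ s := by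
    rintro p s (⟨⟨h1, _⟩, _⟩ | rfl)
    · exact h1
    · exact htT
  have hτ_ge : t ≤ τstar ω := by
    rw [hτstar]; exact le_csInf ⟨T, Or.inr rfl⟩ (hbdd _)
  have hτ_le : τstar ω ≤ T := by
    rw [hτstar]; exact csInf_le ⟨t, hbdd _⟩ (Or.inr rfl)
  have hτn_ge : ∀ n, t ≤ τn n ω := by
    intro n; rw [hτn]; exact le_csInf ⟨T, Or.inr rfl⟩ (hbdd _)
  have key : ∀ s, t ≤ s → s < τstar ω → Θ s (X s ω) < U s (X s ω) := by
    intro s hts hsτ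
    rcases lt_or_eq_of_le (hUΘ s (X s ω)) with h | h
    · exact h
    · exfalso
      have hmem : s ∈ ({s ∈ Icc t T | U s (X s ω) = Θ s (X s ω)} ∪ {T} : Set ℝ) :=
        Or.inl ⟨⟨hts, le_of_lt (lt_of_lt_of_le hsτ hτ_le)⟩, h.symm⟩
      have := csInf_le ⟨t, hbdd _⟩ hmem
      rw [← hτstar] at this
      linarith
  -- the key claim
  have claim : ∀ a, t ≤ a → a < τstar ω → ∀ᶠ k in atTop, a ≤ τn (φ k) ω := by
    intro a hta haτ
    have haT : a ≤ T := le_trans haτ.le hτ_le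
    set K : Set H := (fun s => X s ω) '' Icc 0 T with hK
    have hKc : IsCompact K := isCompact_Icc.image (hXcont ω)
    have hgc : ContinuousOn (fun s => U s (X s ω) - Θ s (X s ω)) (Icc t a) :=
      ((hUcont.comp (continuous_id.prodMk (hXcont ω))).sub
        (hΘcont.comp (continuous_id.prodMk (hXcont ω)))).continuousOn
    obtain ⟨s0, hs0, hmin⟩ := isCompact_Icc.exists_isMinOn (nonempty_Icc.mpr hta) hgc
    set ρ := U s0 (X s0 ω) - Θ s0 (X s0 ω) with hρdef
    have hρ : 0 < ρ := sub_pos.mpr (key s0 hs0.1 (lt_of_le_of_lt hs0.2 haτ))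
    set M := |LU| + |LΘ| + 1 with hMdef
    have hM : 0 < M := by positivity
    set η := ρ / (4 * M) with hηdef
    have hη : 0 < η := by positivity
    have E1 := hφ.tendsto_atTop.eventually
      ((Metric.tendstoUniformlyOn_iff.mp (hUconv K hKc)) (ρ / 4) (by positivity))
    have E2 := hφ.tendsto_atTop.eventually
      ((Metric.tendstoUniformlyOn_iff.mp (hΘconv K hKc)) (ρ / 4) (by positivity))
    have E3 := hω.eventually_lt_const hη
    filter_upwards [E1, E2, E3] with k h1 h2 h3
    rw [hτn]
    refine le_csInf ⟨T, Or.inr rfl⟩ ?_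
    rintro b (⟨⟨htb, hbT⟩, heq⟩ | rfl)
    · by_contra hab
      push_neg at hab
      have hb0T : b ∈ Icc 0 T := ⟨le_trans ht0 htb, hbT⟩
      have hba : b ∈ Icc t a := ⟨htb, hab.le⟩
      have hd : ‖Xn (φ k) b ω - X b ω‖ < η :=
        lt_of_le_of_lt
          (le_biSup_Icc (fun s => ‖Xn (φ k) s ω - X s ω‖)
            (((hXncont (φ k) ω).sub (hXcont ω)).norm) 0 T b hb0T) h3
      have hA1 := h1 (b, X b ω) ⟨hb0T, ⟨b, hb0T, rfl⟩⟩
      have hA2 := h2 (b, X b ω) ⟨hb0T, ⟨b, hb0T, rfl⟩⟩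
      rw [Real.dist_eq] at hA1 hA2
      dsimp only at hA1 hA2
      have hA1' := (abs_lt.mp hA1).2
      have hA2' := (abs_lt.mp hA2).1
      have hlipU := hUlip (φ k) b ⟨hb0T.1, hbT⟩ (Xn (φ k) b ω) (X b ω)
      have hlipΘ := hΘlip (φ k) b ⟨hb0T.1, hbT⟩ (Xn (φ k) b ω) (X b ω)
      have hA3 := neg_le_of_abs_le hlipU
      have hA4 := le_of_abs_le hlipΘ
      have hd0 : (0 : ℝ) ≤ ‖Xn (φ k) b ω - X b ω‖ := norm_nonneg _
      have hLU : LU * ‖Xn (φ k) b ω - X b ω‖ ≤ |LU| * η :=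
        le_trans (mul_le_mul_of_nonneg_right (le_abs_self _) hd0)
          (mul_le_mul_of_nonneg_left hd.le (abs_nonneg _))
      have hLΘ : LΘ * ‖Xn (φ k) b ω - X b ω‖ ≤ |LΘ| * η :=
        le_trans (mul_le_mul_of_nonneg_right (le_abs_self _) hd0)
          (mul_le_mul_of_nonneg_left hd.le (abs_nonneg _))
      have hMη : M * η = ρ / 4 := by
        rw [hηdef]; field_simp
      have hmin' : ρ ≤ U b (X b ω) - Θ b (X b ω) := hmin hba
      have h6 : |LU| * η + |LΘ| * η ≤ ρ / 4 := by nlinarith [abs_nonneg LU, abs_nonneg LΘ]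
      linarith
    · exact haT
  -- conclude
  rcases eq_or_lt_of_le hτ_ge with heq | hlt
  · have hconst : ∀ j : ℕ, min (τstar ω) (τn (φ j) ω) = τstar ω := fun j =>
      min_eq_left (le_trans heq.ge (hτn_ge _))
    exact tendsto_const_nhds.congr fun j => (hconst j).symm
  · rw [Metric.tendsto_nhds]
    intro ε hε
    set a := max t (τstar ω - ε / 2) with hadef
    have hta : t ≤ a := le_max_left _ _
    have haτ : a < τstar ω := max_lt hlt (by linarith)
    filter_upwards [claim a hta haτ] with k hk
    have h1 : min (τstar ω) (τn (φ k) ω) ≤ τstar ω := min_le_left _ _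
    have h2 : a ≤ min (τstar ω) (τn (φ k) ω) := le_min haτ.le hk
    have h3 : τstar ω - ε / 2 ≤ a := le_max_right _ _
    rw [Real.dist_eq, abs_lt]
    constructor <;> linarith
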